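/- Let K have characteristic zero and let V be a vector space. In the bialgebra Sym(V) with reduced coproduct Δ̄(f) := Δ(f) − f⊗1 − 1⊗f defined on the augmentation ideal Sym^{≥1}(V), an element f ∈ Sym^{≥1}(V) satisfies Δ̄(f) = 0 if and only if f ∈ V (i.e. the primitive elements of Sym(V) are exactly the linear polynomials). -/

import Mathlib

/-!
Composing `Δ` with multiplication `f ⊗ g ↦ f * g` gives the algebra map `Xᵢ ↦ 2 Xᵢ`, which
scales the monomials of degree `n` by `2 ^ n`. A primitive `f` is sent to `f * 1 + 1 * f = 2 f`,
so in characteristic zero all its monomials have degree one. Conversely the primitive elements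
form a submodule containing the generators.
-/

open scoped TensorProduct
open MvPolynomial

section Primitive

variable {R A : Type*} [CommSemiring R] [Semiring A] [Algebra R A]

def primitiveSubmodule (Δ : A →ₗ[R] A ⊗[R] A) : Submodule R A where
  carrier := {f | Δ f = f ⊗ₜ 1 + 1 ⊗ₜ f}
  zero_mem' := by simp
  add_mem' {f g} (hf : Δ f = _) (hg : Δ g = _) := by
    change Δ (f + g) = _
    rw [map_add, hf, hg, TensorProduct.add_tmul, TensorProduct.tmul_add]
    abel
  smul_mem' c f (hf : Δ f = _) := by
    change Δ (c • f) = _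
    rw [map_smul, hf, smul_add, TensorProduct.smul_tmul', ← TensorProduct.tmul_smul]

theorem mem_primitiveSubmodule {Δ : A →ₗ[R] A ⊗[R] A} {f : A} :
    f ∈ primitiveSubmodule Δ ↔ Δ f = f ⊗ₜ 1 + 1 ⊗ₜ f :=
  Iff.rfl

end Primitive

namespace MvPolynomial

variable {R σ : Type*} [CommSemiring R]

theorem aeval_smul_X_monomial (c a : R) (d : σ →₀ ℕ) :
    aeval (fun i => c • X i) (monomial d a) = monomial d (c ^ d.degree * a) := by
  simp only [aeval_monomial, smul_eq_C_mul, mul_pow, Finsupp.prod_mul, ← map_pow]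
  rw [← map_finsuppProd, Finsupp.prod, Finset.prod_pow_eq_pow_sum, ← Finsupp.degree_apply,
    monomial_eq, algebraMap_eq, C_mul]
  ring

theorem coeff_aeval_smul_X (c : R) (f : MvPolynomial σ R) (d : σ →₀ ℕ) :
    coeff d (aeval (fun i => c • X i) f) = c ^ d.degree * coeff d f := by
  classical
  induction f using induction_on' with
  | monomial e a =>
    rw [aeval_smul_X_monomial, coeff_monomial, coeff_monomial]
    split_ifs with h
    · rw [h]
    · rw [mul_zero]
  | add p q hp hq => rw [map_add, coeff_add, coeff_add, hp, hq, mul_add]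

theorem isHomogeneous_of_aeval_smul_X_eq [IsCancelMulZero R] {c : R} {n : ℕ}
    (hc : ∀ m, c ^ m = c ^ n → m = n) {f : MvPolynomial σ R}
    (h : aeval (fun i => c • X i) f = c ^ n • f) : f.IsHomogeneous n := by
  intro d hd
  have hcoeff := congrArg (coeff d) h
  rw [coeff_aeval_smul_X, coeff_smul, smul_eq_mul] at hcoeff
  have hdeg : d.degree = n := hc _ (mul_right_cancel₀ hd hcoeff)
  rwa [Finsupp.degree_eq_weight_one] at hdeg

theorem lmul'_comp_eq_aeval_two_smul_X
    {Δ : MvPolynomial σ R →ₐ[R] MvPolynomial σ R ⊗[R] MvPolynomial σ R}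
    (hΔ : ∀ i, Δ (X i) = 1 ⊗ₜ X i + X i ⊗ₜ 1) :
    (Algebra.TensorProduct.lmul' R).comp Δ = aeval fun i => (2 : R) • X i := by
  refine algHom_ext fun i => ?_
  rw [AlgHom.comp_apply, hΔ, map_add, Algebra.TensorProduct.lmul'_apply_tmul,
    Algebra.TensorProduct.lmul'_apply_tmul, aeval_X, one_mul, mul_one, two_smul]

end MvPolynomial

/-- Over a field `K` of characteristic zero, in the bialgebra `Sym(V)` (modelled by
`MvPolynomial σ K`, with coproduct `Δ` determined by `Δ(x) = 1⊗x + x⊗1` on generators)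
an element `f` of the augmentation ideal `Sym^{≥1}(V)` satisfies `Δ̄(f) = 0`, i.e.
`Δ(f) = f⊗1 + 1⊗f`, if and only if `f ∈ V`: the primitive elements of `Sym(V)` are
exactly the linear polynomials. -/
theorem primitives_of_symAlg (K σ : Type*) [Field K] [CharZero K]
    (Δ : MvPolynomial σ K →ₐ[K] (MvPolynomial σ K ⊗[K] MvPolynomial σ K))
    (hΔ : ∀ i : σ, Δ (X i) = 1 ⊗ₜ[K] X i + X i ⊗ₜ[K] 1) :
    ∀ f : MvPolynomial σ K, constantCoeff f = 0 →
      (Δ f = f ⊗ₜ[K] 1 + 1 ⊗ₜ[K] f ↔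
        f ∈ Submodule.span K (Set.range (X : σ → MvPolynomial σ K))) := by
  intro f _
  constructor
  · intro hf
    have two_pow_inj (m : ℕ) (hm : (2 : K) ^ m = 2 ^ 1) : m = 1 :=
      Nat.pow_right_injective le_rfl (by exact_mod_cast hm)
    have hdouble : aeval (fun i => (2 : K) • X i) f = (2 : K) ^ 1 • f := by
      rw [← lmul'_comp_eq_aeval_two_smul_X hΔ, AlgHom.comp_apply, hf, map_add,
        Algebra.TensorProduct.lmul'_apply_tmul, Algebra.TensorProduct.lmul'_apply_tmul,
        mul_one, one_mul, pow_one, two_smul]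
    rw [← homogeneousSubmodule_one_eq_span_X]
    exact isHomogeneous_of_aeval_smul_X_eq two_pow_inj hdouble
  · intro hf
    have hX : Set.range (X : σ → MvPolynomial σ K) ⊆ primitiveSubmodule Δ.toLinearMap := by
      rintro _ ⟨i, rfl⟩
      rw [SetLike.mem_coe, mem_primitiveSubmodule, AlgHom.toLinearMap_apply, hΔ, add_comm]
    exact Submodule.span_le.mpr hX hf
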